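/- For any v ∈ V: (i) if (x,u) ∈ 𝒢_+, then |x − r(x,u)| ≤ v if and only if ( x < d(v), or ( x = d(v) and h_+(x,u) ≤ h_v ) ); (ii) if (x,u) ∈ 𝒢_−, then |x − r(x,u)| ≤ v if and only if ( x > c(v), or ( x = c(v) and h_−(x,u) ≤ h_v ) ). -/

import Mathlib

/-!
For `(x,u) ∈ 𝒢₊` put `h = h₊(x,u)`. The conditions defining `𝒢₊` give `G < h` on `[0,x)`,
`h ≤ G(x)` and `0 < h < m`, so `x₊(h) = x`, `r(x,u) = x₋(h)` and `|x - r(x,u)| = w(h)`.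
Fix `h₀` with `w(h₀) = v`, so that `d(v) = x₊(h₀)`. As `x₊` and `w` are nondecreasing,
`x < d(v)` forces `h ≤ h₀` and hence `w(h) ≤ v`, while `w(h) ≤ v` with `h > h₀` forces
`w(h) = v` and hence `x = d(v)`. When `x = d(v)`, `w(h) ≤ v` amounts to `h ≤ h_v`; the endpoint
`h_v` is included because `x₊` and `x₋` are left-continuous.
The negative half is the positive one for `-X`, whose `G` is `x ↦ G(-x)`.
-/


open MeasureTheory ProbabilityTheory Set Filter Function
open scoped ENNReal NNReal Topology

noncomputable section

namespace PinelisTtest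

variable {Ω : Type*} [MeasurableSpace Ω]

/-- The function `G` from the paper: `G x = E[X 1{X ∈ (0,x]}]` for `x ≥ 0`,
`G x = E[(-X) 1{X ∈ [x,0)}]` for `x < 0`. -/
def G (P : Measure Ω) (X : Ω → ℝ) (x : ℝ) : ℝ :=
  if 0 ≤ x then ∫ ω, (if X ω ∈ Set.Ioc (0:ℝ) x then X ω else 0) ∂P
  else ∫ ω, (if X ω ∈ Set.Ico x (0:ℝ) then -(X ω) else 0) ∂P

/-- `m := (1/2) E|X|`. -/
def mHalf (P : Measure Ω) (X : Ω → ℝ) : ℝ := (1/2) * ∫ ω, |X ω| ∂P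

/-- `G` extended to `[-∞,∞]`, with `G(±∞) = m`. -/
def Gbar (P : Measure Ω) (X : Ω → ℝ) (x : EReal) : ℝ :=
  if x = ⊤ ∨ x = ⊥ then mHalf P X else G P X x.toReal

/-- `x_+(h) := inf {x ∈ [0,∞] : G(x) ≥ h}`. -/
def xPlus (P : Measure Ω) (X : Ω → ℝ) (h : ℝ) : EReal :=
  sInf {x : EReal | 0 ≤ x ∧ h ≤ Gbar P X x}

/-- `x_-(h) := sup {x ∈ [-∞,0] : G(x) ≥ h}`. -/
def xMinus (P : Measure Ω) (X : Ω → ℝ) (h : ℝ) : EReal :=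
  sSup {x : EReal | x ≤ 0 ∧ h ≤ Gbar P X x}

/-- `w(h) := x_+(h) - x_-(h)`. -/
def wFun (P : Measure Ω) (X : Ω → ℝ) (h : ℝ) : EReal := xPlus P X h - xMinus P X h

/-- `V := {w(h) : h ∈ (0,m]}`. -/
def V (P : Measure Ω) (X : Ω → ℝ) : Set EReal := wFun P X '' Set.Ioc 0 (mHalf P X)

/-- `h_+(x,u) := G(x-) + u (G(x) - G(x-))`. -/
def hPlus (P : Measure Ω) (X : Ω → ℝ) (x u : ℝ) : ℝ :=
  leftLim (G P X) x + u * (G P X x - leftLim (G P X) x)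

/-- `h_-(x,u) := G(x+) + u (G(x) - G(x+))`. -/
def hMinus (P : Measure Ω) (X : Ω → ℝ) (x u : ℝ) : ℝ :=
  rightLim (G P X) x + u * (G P X x - rightLim (G P X) x)

/-- `H(x,u)`. -/
def H (P : Measure Ω) (X : Ω → ℝ) (x u : ℝ) : ℝ :=
  if 0 ≤ x then hPlus P X x u else hMinus P X x u

/-- The reciprocating function `r(x,u)` (real-valued; the extended value is converted
by `EReal.toReal`, which only matters off the almost-sure good set). -/
def recip (P : Measure Ω) (X : Ω → ℝ) (x u : ℝ) : ℝ :=
  if 0 ≤ x then (xMinus P X (H P X x u)).toReal else (xPlus P X (H P X x u)).toReal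

/-- `U_X(ω) := U(ω)` if `P(X = X(ω)) ≠ 0`, and `:= 1` otherwise. -/
def UX (P : Measure Ω) (X U : Ω → ℝ) (ω : Ω) : ℝ :=
  if P {ω' | X ω' = X ω} ≠ 0 then U ω else 1

/-- `W := |X - r(X, U_X)|`. -/
def W (P : Measure Ω) (X U : Ω → ℝ) (ω : Ω) : ℝ :=
  |X ω - recip P X (X ω) (UX P X U ω)|

/-- `Y := |X ⬝ r(X, U_X)|`. -/
def Yf (P : Measure Ω) (X U : Ω → ℝ) (ω : Ω) : ℝ :=
  |X ω * recip P X (X ω) (UX P X U ω)|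

/-- `U` is uniformly distributed on `[0,1]`. -/
def IsUniform01 (P : Measure Ω) (U : Ω → ℝ) : Prop :=
  P.map U = volume.restrict (Set.Icc (0:ℝ) 1)

/-- `M_+`. -/
def Mplus (P : Measure Ω) (X : Ω → ℝ) : Set ℝ :=
  {x | 0 < x ∧ ∀ y < x, 0 < P {ω | X ω ∈ Set.Ioc y x}}

/-- `N_+`. -/
def Nplus (P : Measure Ω) (X : Ω → ℝ) : Set ℝ :=
  {x | 0 < x ∧ P {ω | X ω = x} = 0}

/-- `L_+`. -/
def Lplus (P : Measure Ω) (X : Ω → ℝ) : Set ℝ :=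
  {x | 0 < x ∧ ∃ y, 0 ≤ y ∧ y < x ∧ P {ω | X ω ∈ Set.Ioo y x} = 0}

/-- `M_-`. -/
def Mminus (P : Measure Ω) (X : Ω → ℝ) : Set ℝ :=
  {x | x < 0 ∧ ∀ y, x < y → 0 < P {ω | X ω ∈ Set.Ico x y}}

/-- `N_-`. -/
def Nminus (P : Measure Ω) (X : Ω → ℝ) : Set ℝ :=
  {x | x < 0 ∧ P {ω | X ω = x} = 0}

/-- `L_-`. -/
def Lminus (P : Measure Ω) (X : Ω → ℝ) : Set ℝ :=
  {x | x < 0 ∧ ∃ y, x < y ∧ y ≤ 0 ∧ P {ω | X ω ∈ Set.Ioo x y} = 0}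

/-- `𝒢_+`. -/
def Gplus (P : Measure Ω) (X : Ω → ℝ) : Set (ℝ × ℝ) :=
  {p | p.1 ∈ Mplus P X ∧ 0 ≤ p.2 ∧ p.2 ≤ 1 ∧
    (p.1 ∈ Nplus P X → p.2 = 1) ∧ (p.1 ∈ Lplus P X → 0 < p.2) ∧
    (P {ω | p.1 < X ω} = 0 → p.1 ∉ Nplus P X ∧ p.2 < 1)}

/-- `𝒢_-`. -/
def Gminus (P : Measure Ω) (X : Ω → ℝ) : Set (ℝ × ℝ) :=
  {p | p.1 ∈ Mminus P X ∧ 0 ≤ p.2 ∧ p.2 ≤ 1 ∧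
    (p.1 ∈ Nminus P X → p.2 = 1) ∧ (p.1 ∈ Lminus P X → 0 < p.2) ∧
    (P {ω | X ω < p.1} = 0 → p.1 ∉ Nminus P X ∧ p.2 < 1)}

/-- `𝒢 := 𝒢_+ ∪ 𝒢_-`. -/
def Gset (P : Measure Ω) (X : Ω → ℝ) : Set (ℝ × ℝ) := Gplus P X ∪ Gminus P X


/-- `h_v := sup {h ∈ (0,m] : w(h) ≤ v}`. -/
def hOf (P : Measure Ω) (X : Ω → ℝ) (v : EReal) : ℝ :=
  sSup {h : ℝ | h ∈ Set.Ioc 0 (mHalf P X) ∧ wFun P X h ≤ v}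

section Integrals

variable {P : Measure Ω} {X : Ω → ℝ}

lemma G_of_nonneg (hXm : Measurable X) {x : ℝ} (hx : 0 ≤ x) :
    G P X x = ∫ ω in X ⁻¹' Ioc 0 x, X ω ∂P := by
  rw [G, if_pos hx, ← integral_indicator (hXm measurableSet_Ioc)]
  congr 1 with ω
  by_cases h : X ω ∈ Ioc 0 x <;> simp [h]

lemma setIntegral_preimage_nonneg {s : Set ℝ} (hs : MeasurableSet s) (hXm : Measurable X)
    (hs0 : s ⊆ Ioi 0) : 0 ≤ ∫ ω in X ⁻¹' s, X ω ∂P :=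
  setIntegral_nonneg (hXm hs) fun _ hω => (hs0 hω).le

lemma setIntegral_preimage_pos {s : Set ℝ} (hs : MeasurableSet s) (hXm : Measurable X)
    (hXint : Integrable X P) (hs0 : s ⊆ Ioi 0) (hP : P (X ⁻¹' s) ≠ 0) :
    0 < ∫ ω in X ⁻¹' s, X ω ∂P := by
  rw [setIntegral_pos_iff_support_of_nonneg_ae
    ((ae_restrict_iff' (hXm hs)).2 (ae_of_all _ fun _ hω => (hs0 hω).le)) hXint.integrableOn]
  convert pos_iff_ne_zero.2 hP using 2
  exact inter_eq_right.2 fun ω hω => (hs0 hω).ne'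

lemma setIntegral_preimage_union {s t : Set ℝ} (hst : Disjoint s t) (ht : MeasurableSet t)
    (hXm : Measurable X) (hXint : Integrable X P) :
    ∫ ω in X ⁻¹' (s ∪ t), X ω ∂P = ∫ ω in X ⁻¹' s, X ω ∂P + ∫ ω in X ⁻¹' t, X ω ∂P :=
  setIntegral_union (hst.preimage X) (hXm ht) hXint.integrableOn hXint.integrableOn

lemma mHalf_eq_setIntegral (hXm : Measurable X) (hXint : Integrable X P)
    (hXmean : ∫ ω, X ω ∂P = 0) : mHalf P X = ∫ ω in X ⁻¹' Ioi 0, X ω ∂P := by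
  have hs : MeasurableSet (X ⁻¹' Ioi 0) := hXm measurableSet_Ioi
  have habs_pos : ∫ ω in X ⁻¹' Ioi 0, |X ω| ∂P = ∫ ω in X ⁻¹' Ioi 0, X ω ∂P :=
    setIntegral_congr_fun hs fun ω hω => abs_of_pos hω
  have habs_neg : ∫ ω in (X ⁻¹' Ioi 0)ᶜ, |X ω| ∂P = -∫ ω in (X ⁻¹' Ioi 0)ᶜ, X ω ∂P := by
    rw [← integral_neg]
    exact setIntegral_congr_fun hs.compl fun ω hω => abs_of_nonpos (not_lt.1 hω)
  have hsum := integral_add_compl hs hXint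
  rw [mHalf, ← integral_add_compl hs hXint.abs, habs_pos, habs_neg]
  linarith

end Integrals

section PositiveHalfLine

lemma G_zero {P : Measure Ω} {X : Ω → ℝ} : G P X 0 = 0 := by
  simp [G]

variable {P : Measure Ω} {X : Ω → ℝ} (hXm : Measurable X) (hXint : Integrable X P)
include hXm hXint

lemma tendsto_setIntegral_preimage {ι : Type*} {l : Filter ι} [l.IsCountablyGenerated]
    {s : ι → Set ℝ} {t : Set ℝ} (hs : ∀ i, MeasurableSet (s i)) (ht : MeasurableSet t)
    (hst : ∀ a : ℝ, ∀ᶠ i in l, a ∈ s i ↔ a ∈ t) :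
    Tendsto (fun i => ∫ ω in X ⁻¹' s i, X ω ∂P) l (𝓝 (∫ ω in X ⁻¹' t, X ω ∂P)) := by
  simp_rw [← integral_indicator (hXm (hs _)), ← integral_indicator (hXm ht)]
  refine tendsto_integral_filter_of_dominated_convergence (fun ω => ‖X ω‖)
    (.of_forall fun i => (hXint.indicator (hXm (hs i))).aestronglyMeasurable)
    (.of_forall fun i => .of_forall fun ω => norm_indicator_le_norm_self _ _) hXint.norm
    (.of_forall fun ω => tendsto_const_nhds.congr' ?_)
  filter_upwards [hst (X ω)] with i hi
  classical
  exact if_congr hi.symm rfl rfl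

lemma G_add_setIntegral_Ioo {x y : ℝ} (hy : 0 ≤ y) (hyx : y < x) :
    G P X y + ∫ ω in X ⁻¹' Ioo y x, X ω ∂P = ∫ ω in X ⁻¹' Ioo 0 x, X ω ∂P := by
  rw [G_of_nonneg hXm hy, ← setIntegral_preimage_union _ measurableSet_Ioo hXm hXint,
    Ioc_union_Ioo_eq_Ioo hy hyx]
  exact disjoint_left.2 fun a ha ha' => ha'.1.not_ge ha.2

lemma monotoneOn_G : MonotoneOn (G P X) (Ici 0) := by
  intro y (hy : 0 ≤ y) x (hx : 0 ≤ x) hyx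
  rw [G_of_nonneg hXm hy, G_of_nonneg hXm hx]
  exact setIntegral_mono_set hXint.integrableOn
    ((ae_restrict_iff' (hXm measurableSet_Ioc)).2 (ae_of_all _ fun _ hω => hω.1.le))
    (.of_forall (preimage_mono (Ioc_subset_Ioc_right hyx)))

lemma G_nonneg {x : ℝ} (hx : 0 ≤ x) : 0 ≤ G P X x :=
  G_zero (P := P) (X := X) ▸ monotoneOn_G hXm hXint self_mem_Ici hx hx

lemma G_eq_setIntegral_Ioo_add {x : ℝ} (hx : 0 < x) :
    G P X x = ∫ ω in X ⁻¹' Ioo 0 x, X ω ∂P + x * P.real {ω | X ω = x} := by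
  have hatom : ∫ ω in X ⁻¹' {x}, X ω ∂P = x * P.real {ω | X ω = x} := by
    rw [setIntegral_congr_fun (hXm (measurableSet_singleton x)) fun ω hω => hω,
      setIntegral_const, smul_eq_mul, mul_comm]
    rfl
  rw [G_of_nonneg hXm hx.le, ← Ioo_union_right hx, ← hatom,
    setIntegral_preimage_union _ (measurableSet_singleton x) hXm hXint]
  simp

lemma tendsto_G_nhdsLT {x : ℝ} (hx : 0 < x) :
    Tendsto (G P X) (𝓝[<] x) (𝓝 (∫ ω in X ⁻¹' Ioo 0 x, X ω ∂P)) := by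
  refine (tendsto_setIntegral_preimage hXm hXint (s := fun y => Ioc 0 y)
      (fun _ => measurableSet_Ioc) measurableSet_Ioo fun a => ?_).congr' ?_
  · rcases lt_or_ge a x with ha | ha
    · filter_upwards [Ioo_mem_nhdsLT ha] with y hy
      exact ⟨fun h => ⟨h.1, ha⟩, fun h => ⟨h.1, hy.1.le⟩⟩
    · filter_upwards [self_mem_nhdsWithin] with y (hy : y < x)
      exact ⟨fun h => absurd (h.2.trans_lt hy) ha.not_gt, fun h => absurd h.2 ha.not_gt⟩
  · filter_upwards [Ioo_mem_nhdsLT hx] with y hy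
    exact (G_of_nonneg hXm hy.1.le).symm

lemma leftLim_G {x : ℝ} (hx : 0 < x) :
    leftLim (G P X) x = ∫ ω in X ⁻¹' Ioo 0 x, X ω ∂P :=
  leftLim_eq_of_tendsto (tendsto_G_nhdsLT hXm hXint hx)

variable (hXmean : ∫ ω, X ω ∂P = 0)
include hXmean

lemma G_add_setIntegral_Ioi {x : ℝ} (hx : 0 ≤ x) :
    G P X x + ∫ ω in X ⁻¹' Ioi x, X ω ∂P = mHalf P X := by
  rw [G_of_nonneg hXm hx, ← setIntegral_preimage_union (Ioc_disjoint_Ioi le_rfl)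
    measurableSet_Ioi hXm hXint, Ioc_union_Ioi_eq_Ioi hx, mHalf_eq_setIntegral hXm hXint hXmean]

lemma G_le_mHalf {x : ℝ} (hx : 0 ≤ x) : G P X x ≤ mHalf P X := by
  have := G_add_setIntegral_Ioi hXm hXint hXmean hx
  have := setIntegral_preimage_nonneg (P := P) measurableSet_Ioi hXm (Ioi_subset_Ioi hx)
  linarith

lemma tendsto_G_atTop : Tendsto (G P X) atTop (𝓝 (mHalf P X)) := by
  rw [mHalf_eq_setIntegral hXm hXint hXmean]
  refine (tendsto_setIntegral_preimage hXm hXint (s := fun y => Ioc 0 y)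
      (fun _ => measurableSet_Ioc) measurableSet_Ioi fun a => ?_).congr' ?_
  · filter_upwards [eventually_ge_atTop a] with y hy
    exact ⟨fun h => h.1, fun h => ⟨h, hy⟩⟩
  · filter_upwards [eventually_ge_atTop 0] with y hy
    exact (G_of_nonneg hXm hy).symm

end PositiveHalfLine

section Quantiles

variable {P : Measure Ω} {X : Ω → ℝ}

lemma Gbar_coe (x : ℝ) : Gbar P X x = G P X x := by
  simp [Gbar]

lemma xPlus_nonneg (h : ℝ) : 0 ≤ xPlus P X h := le_sInf fun _ ha => ha.1

lemma xMinus_nonpos (h : ℝ) : xMinus P X h ≤ 0 := sSup_le fun _ ha => ha.1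

lemma xPlus_mono : Monotone (xPlus P X) :=
  fun _ _ hh => sInf_le_sInf fun _ ha => ⟨ha.1, hh.trans ha.2⟩

lemma xMinus_anti : Antitone (xMinus P X) :=
  fun _ _ hh => sSup_le_sSup fun _ ha => ⟨ha.1, hh.trans ha.2⟩

lemma wFun_mono : Monotone (wFun P X) :=
  fun _ _ hh => EReal.sub_le_sub (xPlus_mono hh) (xMinus_anti hh)

lemma xPlus_le_coe {h z : ℝ} (hz : 0 ≤ z) (hG : h ≤ G P X z) : xPlus P X h ≤ z :=
  sInf_le ⟨EReal.coe_nonneg.2 hz, by rwa [Gbar_coe]⟩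

lemma coe_le_xPlus {h x : ℝ} (hG : ∀ y, 0 ≤ y → y < x → G P X y < h) :
    (x : EReal) ≤ xPlus P X h := by
  refine le_sInf fun a ⟨ha0, haG⟩ => le_of_not_gt fun hax => ?_
  induction a using EReal.rec with
  | bot => exact absurd ha0 (by simp)
  | top => exact absurd hax (by simp)
  | coe y =>
    rw [Gbar_coe] at haG
    exact (hG y (EReal.coe_nonneg.1 ha0) (EReal.coe_lt_coe_iff.1 hax)).not_ge haG

variable (hXm : Measurable X) (hXint : Integrable X P)
include hXm hXint

lemma exists_coe_le_xPlus {h z : ℝ} (hh : 0 < h) (hz : (z : EReal) < xPlus P X h) :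
    ∃ h' ∈ Ioo 0 h, (z : EReal) ≤ xPlus P X h' := by
  rcases lt_or_ge z 0 with hz0 | hz0
  · exact ⟨h / 2, ⟨by linarith, by linarith⟩,
      (EReal.coe_nonpos.2 hz0.le).trans (xPlus_nonneg (P := P) (X := X) _)⟩
  have hGz : G P X z < h := lt_of_not_ge fun hle => hz.not_ge (xPlus_le_coe hz0 hle)
  have := G_nonneg hXm hXint hz0
  exact ⟨(G P X z + h) / 2, ⟨by linarith, by linarith⟩,
    coe_le_xPlus fun y hy hyz => (monotoneOn_G hXm hXint hy hz0 hyz.le).trans_lt (by linarith)⟩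

lemma xPlus_ne_top (hXmean : ∫ ω, X ω ∂P = 0) {h : ℝ} (hh : h < mHalf P X) :
    xPlus P X h ≠ ⊤ := by
  obtain ⟨y, hy, hy0⟩ :=
    (((tendsto_G_atTop hXm hXint hXmean).eventually (eventually_gt_nhds hh)).and
      (eventually_ge_atTop 0)).exists
  exact ne_top_of_le_ne_top (EReal.coe_ne_top y) (xPlus_le_coe hy0 hy.le)

end Quantiles

section PositiveBranch

variable {P : Measure Ω} {X : Ω → ℝ}
  (hXm : Measurable X) (hXint : Integrable X P)
include hXm hXint

lemma hPlus_eq {x : ℝ} (hx : 0 < x) (u : ℝ) :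
    hPlus P X x u = ∫ ω in X ⁻¹' Ioo 0 x, X ω ∂P + u * (x * P.real {ω | X ω = x}) := by
  rw [hPlus, leftLim_G hXm hXint hx, G_eq_setIntegral_Ioo_add hXm hXint hx, add_sub_cancel_left]

lemma G_lt_hPlus [IsFiniteMeasure P] {x u : ℝ} (hxu : (x, u) ∈ Gplus P X) {y : ℝ}
    (hy : 0 ≤ y) (hyx : y < x) : G P X y < hPlus P X x u := by
  -- If `X` charges `(y, x)` then already `G y < G(x-)`; otherwise `x ∈ L₊` forces `u > 0` and,
  -- as `x ∈ M₊`, an atom at `x`, so that `G(x-) < h₊(x, u)`.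
  obtain ⟨⟨hx, hM⟩, hu0, -, -, hL, -⟩ := hxu
  have hsplit := G_add_setIntegral_Ioo hXm hXint hy hyx
  rw [hPlus_eq hXm hXint hx]
  by_cases hgap : P {ω | X ω ∈ Ioo y x} = 0
  · have hle : P {ω | X ω ∈ Ioc y x} ≤ P {ω | X ω ∈ Ioo y x} + P {ω | X ω = x} := by
      rw [← Ioo_union_right hyx]
      exact measure_union_le _ _
    have hatom : P {ω | X ω = x} ≠ 0 := fun h0 =>
      (hM y hyx).ne' (nonpos_iff_eq_zero.1 (by rwa [hgap, h0, add_zero] at hle))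
    have hjump : 0 < u * (x * P.real {ω | X ω = x}) :=
      mul_pos (hL ⟨hx, y, hy, hyx, hgap⟩) (mul_pos hx (ENNReal.toReal_pos hatom (by finiteness)))
    have := setIntegral_preimage_nonneg (P := P) measurableSet_Ioo hXm
      fun _ (ha : _ ∈ Ioo y x) => hy.trans_lt ha.1
    linarith
  · have := setIntegral_preimage_pos measurableSet_Ioo hXm hXint
      (fun _ (ha : _ ∈ Ioo y x) => hy.trans_lt ha.1) hgap
    have : 0 ≤ u * (x * P.real {ω | X ω = x}) := by positivity
    linarith

lemma hPlus_le_G {x u : ℝ} (hx : 0 < x) (hu1 : u ≤ 1) : hPlus P X x u ≤ G P X x := by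
  rw [hPlus_eq hXm hXint hx, G_eq_setIntegral_Ioo_add hXm hXint hx]
  have : 0 ≤ x * P.real {ω | X ω = x} := by positivity
  nlinarith

lemma hPlus_pos [IsFiniteMeasure P] {x u : ℝ} (hxu : (x, u) ∈ Gplus P X) : 0 < hPlus P X x u :=
  G_zero (P := P) (X := X) ▸ G_lt_hPlus hXm hXint hxu le_rfl hxu.1.1

lemma hPlus_lt_mHalf [IsFiniteMeasure P] (hXmean : ∫ ω, X ω ∂P = 0) {x u : ℝ}
    (hxu : (x, u) ∈ Gplus P X) : hPlus P X x u < mHalf P X := by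
  obtain ⟨⟨hx, -⟩, -, hu1, -, -, hT⟩ := hxu
  by_cases htail : P {ω | x < X ω} = 0
  · obtain ⟨hN, hu⟩ := hT htail
    have hjump : 0 < x * P.real {ω | X ω = x} :=
      mul_pos hx (ENNReal.toReal_pos (fun h0 => hN ⟨hx, h0⟩) (by finiteness))
    have hlt : hPlus P X x u < G P X x := by
      rw [hPlus_eq hXm hXint hx, G_eq_setIntegral_Ioo_add hXm hXint hx]
      nlinarith
    exact hlt.trans_le (G_le_mHalf hXm hXint hXmean hx.le)
  · have := setIntegral_preimage_pos measurableSet_Ioi hXm hXint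
      (fun _ (ha : _ ∈ Ioi x) => hx.trans ha) htail
    have := G_add_setIntegral_Ioi hXm hXint hXmean hx.le
    linarith [hPlus_le_G hXm hXint hx hu1]

lemma xPlus_hPlus [IsFiniteMeasure P] {x u : ℝ} (hxu : (x, u) ∈ Gplus P X) :
    xPlus P X (hPlus P X x u) = x :=
  le_antisymm (xPlus_le_coe hxu.1.1.le (hPlus_le_G hXm hXint hxu.1.1 hxu.2.2.1))
    (coe_le_xPlus fun _ hy hyx => G_lt_hPlus hXm hXint hxu hy hyx)

end PositiveBranch

section Reflection

variable {P : Measure Ω} {X : Ω → ℝ}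

lemma G_neg (x : ℝ) : G P (-X) x = G P X (-x) := by
  rcases lt_trichotomy x 0 with hx | rfl | hx
  · rw [G, G, if_neg hx.not_ge, if_pos (by linarith)]
    congr 1 with ω
    simp only [Pi.neg_apply, mem_Ico, mem_Ioc, neg_neg]
    exact if_congr (by constructor <;> rintro ⟨h1, h2⟩ <;> constructor <;> linarith) rfl rfl
  · simp [G]
  · rw [G, G, if_pos hx.le, if_neg (by linarith)]
    congr 1 with ω
    simp only [Pi.neg_apply, mem_Ico, mem_Ioc]
    exact if_congr (by constructor <;> rintro ⟨h1, h2⟩ <;> constructor <;> linarith) rfl rfl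

lemma mHalf_neg : mHalf P (-X) = mHalf P X := by
  simp [mHalf]

lemma Gbar_neg (a : EReal) : Gbar P (-X) a = Gbar P X (-a) := by
  induction a using EReal.rec with
  | bot => simp [Gbar, mHalf_neg]
  | top => simp [Gbar, mHalf_neg]
  | coe x => rw [← EReal.coe_neg, Gbar_coe, Gbar_coe, G_neg]

lemma xPlus_neg (h : ℝ) : xPlus P (-X) h = -xMinus P X h := by
  refine le_antisymm ?_ ?_
  · refine EReal.le_neg_of_le_neg (sSup_le fun a ⟨ha0, haG⟩ => EReal.le_neg_of_le_neg ?_)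
    exact sInf_le ⟨EReal.neg_nonneg.2 ha0, by rwa [Gbar_neg, neg_neg]⟩
  · refine le_sInf fun a ⟨ha0, haG⟩ => EReal.neg_le.1 (le_sSup ⟨EReal.neg_le_zero.2 ha0, ?_⟩)
    rwa [Gbar_neg] at haG

lemma xMinus_neg (h : ℝ) : xMinus P (-X) h = -xPlus P X h := by
  rw [← neg_neg (xMinus P (-X) h), ← xPlus_neg, neg_neg]

lemma wFun_neg : wFun P (-X) = wFun P X := by
  ext h
  rw [wFun, wFun, xPlus_neg, xMinus_neg, sub_eq_add_neg, neg_neg, add_comm, ← sub_eq_add_neg]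

lemma V_neg : V P (-X) = V P X := by
  rw [V, V, wFun_neg, mHalf_neg]

lemma hOf_neg (v : EReal) : hOf P (-X) v = hOf P X v := by
  rw [hOf, hOf, wFun_neg, mHalf_neg]

end Reflection

section NegativeHalfLine

variable {P : Measure Ω} {X : Ω → ℝ}

lemma mem_Gplus_neg {x u : ℝ} (hxu : (x, u) ∈ Gminus P X) : (-x, u) ∈ Gplus P (-X) := by
  obtain ⟨⟨hx, hM⟩, hu0, hu1, hN, hL, hT⟩ := hxu
  have hIoc : ∀ a b : ℝ, {ω | (-X) ω ∈ Ioc a b} = {ω | X ω ∈ Ico (-b) (-a)} := by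
    intro a b; ext ω; simp only [mem_ofPred_eq, Pi.neg_apply, mem_Ioc, mem_Ico]
    constructor <;> rintro ⟨h1, h2⟩ <;> constructor <;> linarith
  have hIoo : ∀ a b : ℝ, {ω | (-X) ω ∈ Ioo a b} = {ω | X ω ∈ Ioo (-b) (-a)} := by
    intro a b; ext ω; simp only [mem_ofPred_eq, Pi.neg_apply, mem_Ioo]
    constructor <;> rintro ⟨h1, h2⟩ <;> constructor <;> linarith
  have hatom : {ω | (-X) ω = -x} = {ω | X ω = x} := by simp
  have htail : {ω | -x < (-X) ω} = {ω | X ω < x} := by simp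
  refine ⟨⟨neg_pos.2 hx, fun y hy => ?_⟩, hu0, hu1, fun hN' => hN ⟨hx, ?_⟩,
    fun ⟨_, y, hy0, hyx, hy⟩ => hL ⟨hx, -y, by linarith, by linarith, ?_⟩, fun h => ?_⟩
  · rw [hIoc, neg_neg]; exact hM _ (by linarith)
  · rw [← hatom]; exact hN'.2
  · rwa [hIoo, neg_neg] at hy
  · rw [htail] at h
    exact ⟨fun hN' => (hT h).1 ⟨hx, hatom ▸ hN'.2⟩, (hT h).2⟩

variable (hXm : Measurable X) (hXint : Integrable X P)
include hXm hXint

lemma rightLim_G {x : ℝ} (hx : x < 0) :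
    rightLim (G P X) x = leftLim (G P (-X)) (-x) := by
  have hlim := (tendsto_G_nhdsLT hXm.neg hXint.neg (neg_pos.2 hx)).comp
    (tendsto_neg_nhdsGT_neg (a := -x))
  rw [neg_neg] at hlim
  rw [leftLim_G hXm.neg hXint.neg (neg_pos.2 hx)]
  refine rightLim_eq_of_tendsto (hlim.congr fun y => ?_)
  simp [G_neg]

lemma hMinus_eq_hPlus_neg {x : ℝ} (hx : x < 0) (u : ℝ) :
    hMinus P X x u = hPlus P (-X) (-x) u := by
  rw [hMinus, hPlus, rightLim_G hXm hXint hx, G_neg, neg_neg]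

lemma recip_of_neg {x : ℝ} (hx : x < 0) (u : ℝ) :
    recip P X x u = -recip P (-X) (-x) u := by
  rw [recip, recip, if_neg hx.not_ge, if_pos (by linarith), H, H, if_neg hx.not_ge,
    if_pos (by linarith), hMinus_eq_hPlus_neg hXm hXint hx, xMinus_neg, EReal.toReal_neg_eq,
    neg_neg]

lemma xMinus_ne_bot (hXmean : ∫ ω, X ω ∂P = 0) {h : ℝ} (hh : h < mHalf P X) :
    xMinus P X h ≠ ⊥ := by
  have hXmean' : ∫ ω, (-X) ω ∂P = 0 := by simp [integral_neg, hXmean]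
  rw [← neg_neg (xMinus P X h), ← xPlus_neg, Ne, EReal.neg_eq_bot_iff]
  exact xPlus_ne_top hXm.neg hXint.neg hXmean' (mHalf_neg (P := P) (X := X) ▸ hh)

lemma exists_xMinus_le_coe {h z : ℝ} (hh : 0 < h) (hz : xMinus P X h < z) :
    ∃ h' ∈ Ioo 0 h, xMinus P X h' ≤ z := by
  obtain ⟨h', hh', hle⟩ := exists_coe_le_xPlus hXm.neg hXint.neg hh (z := -z)
    (by rwa [xPlus_neg, EReal.coe_neg, EReal.neg_lt_neg_iff])
  exact ⟨h', hh', by rwa [xPlus_neg, EReal.coe_neg, EReal.neg_le_neg_iff] at hle⟩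

end NegativeHalfLine

section Core

variable {P : Measure Ω} {X : Ω → ℝ} (hXm : Measurable X) (hXint : Integrable X P)
include hXm hXint

lemma wFun_le_of_forall_lt {h : ℝ} (hh : 0 < h) (hp : xPlus P X h ≠ ⊤) (hr : xMinus P X h ≠ ⊥)
    {v : EReal} (hv : ∀ h' ∈ Ioo 0 h, wFun P X h' ≤ v) : wFun P X h ≤ v := by
  set p := (xPlus P X h).toReal
  set r := (xMinus P X h).toReal
  have hp' : xPlus P X h = p :=
    (EReal.coe_toReal hp (ne_bot_of_le_ne_bot EReal.zero_ne_bot (xPlus_nonneg h))).symm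
  have hr' : xMinus P X h = r :=
    (EReal.coe_toReal (ne_top_of_le_ne_top EReal.zero_ne_top (xMinus_nonpos h)) hr).symm
  rw [wFun, hp', hr', ← EReal.coe_sub]
  refine EReal.ge_of_forall_gt_iff_ge.1 fun t ht => ?_
  have ht : t < p - r := EReal.coe_lt_coe_iff.1 ht
  set ε := (p - r - t) / 2
  have hε : 0 < ε := half_pos (sub_pos.2 ht)
  obtain ⟨a, ha, hpa⟩ := exists_coe_le_xPlus hXm hXint hh (z := p - ε)
    (by rw [hp']; exact EReal.coe_lt_coe_iff.2 (by linarith))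
  obtain ⟨b, hb, hrb⟩ := exists_xMinus_le_coe hXm hXint hh (z := r + ε)
    (by rw [hr']; exact EReal.coe_lt_coe_iff.2 (by linarith))
  calc (t : EReal) = ((p - ε : ℝ) : EReal) - ((r + ε : ℝ) : EReal) := by
        rw [← EReal.coe_sub]; congr 1; simp only [ε]; ring
    _ ≤ xPlus P X (max a b) - xMinus P X (max a b) :=
        EReal.sub_le_sub (hpa.trans (xPlus_mono (le_max_left _ _)))
          ((xMinus_anti (le_max_right _ _)).trans hrb)
    _ ≤ v := hv _ ⟨lt_max_of_lt_left ha.1, max_lt ha.2 hb.2⟩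

variable (hXmean : ∫ ω, X ω ∂P = 0)
include hXmean

lemma wFun_le_iff {d : EReal → EReal}
    (hd : ∀ h ∈ Icc (0 : ℝ) (mHalf P X), xPlus P X h = d (wFun P X h))
    {v : EReal} (hv : v ∈ V P X) {h : ℝ} (hh : 0 < h) (hhm : h < mHalf P X) :
    wFun P X h ≤ v ↔ xPlus P X h < d v ∨ (xPlus P X h = d v ∧ h ≤ hOf P X v) := by
  obtain ⟨h₀, ⟨hh₀, hh₀m⟩, rfl⟩ := hv
  set S := {h' | h' ∈ Ioc 0 (mHalf P X) ∧ wFun P X h' ≤ wFun P X h₀}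
  have hbdd : BddAbove S := ⟨mHalf P X, fun _ hh' => hh'.1.2⟩
  have hne : S.Nonempty := ⟨h₀, ⟨hh₀, hh₀m⟩, le_rfl⟩
  rw [← hd h₀ ⟨hh₀.le, hh₀m⟩]
  constructor
  · intro hw
    have hhv : h ≤ hOf P X (wFun P X h₀) := le_csSup hbdd ⟨⟨hh, hhm.le⟩, hw⟩
    rcases le_or_gt h h₀ with hle | hlt
    · exact (xPlus_mono hle).lt_or_eq.imp_right fun heq => ⟨heq, hhv⟩
    · refine Or.inr ⟨?_, hhv⟩
      rw [hd h ⟨hh.le, hhm.le⟩, hd h₀ ⟨hh₀.le, hh₀m⟩, le_antisymm hw (wFun_mono hlt.le)]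
  · rintro (hlt | ⟨-, hhv⟩)
    · exact wFun_mono (le_of_not_gt fun hgt => hlt.not_ge (xPlus_mono hgt.le))
    · refine wFun_le_of_forall_lt hXm hXint hh (xPlus_ne_top hXm hXint hXmean hhm)
        (xMinus_ne_bot hXm hXint hXmean hhm) fun h' hh' => ?_
      obtain ⟨h'', hw'', hlt''⟩ := exists_lt_of_lt_csSup hne (hh'.2.trans_le hhv)
      exact (wFun_mono hlt''.le).trans hw''.2

theorem abs_sub_recip_le_iff [IsFiniteMeasure P] {d : EReal → EReal}
    (hd : ∀ h ∈ Icc (0 : ℝ) (mHalf P X), xPlus P X h = d (wFun P X h))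
    {v : EReal} (hv : v ∈ V P X) {x u : ℝ} (hxu : (x, u) ∈ Gplus P X) :
    ((|x - recip P X x u| : ℝ) : EReal) ≤ v ↔
      (x : EReal) < d v ∨ ((x : EReal) = d v ∧ hPlus P X x u ≤ hOf P X v) := by
  have hx : 0 < x := hxu.1.1
  have hlt := hPlus_lt_mHalf hXm hXint hXmean hxu
  have hw : ((|x - recip P X x u| : ℝ) : EReal) = wFun P X (hPlus P X x u) := by
    obtain ⟨r, hr⟩ : ∃ r : ℝ, xMinus P X (hPlus P X x u) = r :=
      ⟨_, (EReal.coe_toReal (ne_top_of_le_ne_top EReal.zero_ne_top (xMinus_nonpos _))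
        (xMinus_ne_bot hXm hXint hXmean hlt)).symm⟩
    have hr0 : r ≤ 0 := EReal.coe_nonpos.1 (hr ▸ xMinus_nonpos _)
    rw [recip, if_pos hx.le, H, if_pos hx.le, wFun, xPlus_hPlus hXm hXint hxu, hr,
      EReal.toReal_coe, abs_of_nonneg (by linarith), EReal.coe_sub]
  rw [hw, wFun_le_iff hXm hXint hXmean hd hv (hPlus_pos hXm hXint hxu) hlt,
    xPlus_hPlus hXm hXint hxu]

end Core

theorem mem_iff_lt_d_or_c_general
    (P : Measure Ω) [IsProbabilityMeasure P] (X : Ω → ℝ)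
    (hXm : Measurable X) (hXint : Integrable X P)
    (hXmean : ∫ ω, X ω ∂P = 0)
    (c d : EReal → EReal)
    (hcd : ∀ h ∈ Set.Icc (0:ℝ) (mHalf P X),
      xPlus P X h = d (wFun P X h) ∧ xMinus P X h = c (wFun P X h))
    (v : EReal) (hv : v ∈ V P X) :
    (∀ x u : ℝ, (x, u) ∈ Gplus P X →
      (((|x - recip P X x u| : ℝ) : EReal) ≤ v ↔
        ((x : EReal) < d v ∨
          ((x : EReal) = d v ∧ hPlus P X x u ≤ hOf P X v)))) ∧
    (∀ x u : ℝ, (x, u) ∈ Gminus P X →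
      (((|x - recip P X x u| : ℝ) : EReal) ≤ v ↔
        (c v < (x : EReal) ∨
          ((x : EReal) = c v ∧ hMinus P X x u ≤ hOf P X v)))) := by
  refine ⟨fun x u hxu => abs_sub_recip_le_iff hXm hXint hXmean (fun h hh => (hcd h hh).1) hv hxu,
    fun x u hxu => ?_⟩
  have hx : x < 0 := hxu.1.1
  have hXmean' : ∫ ω, (-X) ω ∂P = 0 := by simp [integral_neg, hXmean]
  have hd' : ∀ h ∈ Icc (0 : ℝ) (mHalf P (-X)), xPlus P (-X) h = -c (wFun P (-X) h) := by
    intro h hh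
    rw [xPlus_neg, wFun_neg, (hcd h (mHalf_neg (P := P) (X := X) ▸ hh)).2]
  have hreflect := abs_sub_recip_le_iff hXm.neg hXint.neg hXmean' (d := fun v => -c v) hd'
    (V_neg (P := P) (X := X) ▸ hv) (mem_Gplus_neg hxu)
  rw [recip_of_neg hXm hXint hx, hMinus_eq_hPlus_neg hXm hXint hx, ← hOf_neg,
    show |x - -recip P (-X) (-x) u| = |-x - recip P (-X) (-x) u| by rw [← abs_neg]; ring_nf,
    hreflect, EReal.coe_neg, EReal.neg_lt_neg_iff, neg_inj]

/-- Lemma `iff` of the paper. -/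
theorem mem_iff_lt_d_or_c
    (P : Measure Ω) [IsProbabilityMeasure P] (X : Ω → ℝ)
    (hXm : Measurable X) (hXint : Integrable X P)
    (hXmean : ∫ ω, X ω ∂P = 0) (hX0 : P {ω | X ω = 0} ≠ 1)
    (c d : EReal → EReal)
    (hcd : ∀ h ∈ Set.Icc (0:ℝ) (mHalf P X),
      xPlus P X h = d (wFun P X h) ∧ xMinus P X h = c (wFun P X h))
    (v : EReal) (hv : v ∈ V P X) :
    (∀ x u : ℝ, (x, u) ∈ Gplus P X →
      (((|x - recip P X x u| : ℝ) : EReal) ≤ v ↔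
        ((x : EReal) < d v ∨
          ((x : EReal) = d v ∧ hPlus P X x u ≤ hOf P X v)))) ∧
    (∀ x u : ℝ, (x, u) ∈ Gminus P X →
      (((|x - recip P X x u| : ℝ) : EReal) ≤ v ↔
        (c v < (x : EReal) ∨
          ((x : EReal) = c v ∧ hMinus P X x u ≤ hOf P X v)))) :=
  mem_iff_lt_d_or_c_general P X hXm hXint hXmean c d hcd v hv

end PinelisTtest
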